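/- arXiv:1401.7513 — 6 statements merged into one kernel-verified Lean document; each statement's English description precedes it below -/
import Mathlib

section
/- Let P be a group and X ≤ P an extraspecial p-subgroup with [P,X] ≤ Z(X). Then P = X · C_P(X). -/
/-- `G` is extraspecial for the prime `p`: its center has order `p` and `G/Z(G)`
is elementary abelian (nontrivial, abelian of exponent `p`). -/
def IsExtraspecial (p : ℕ) (G : Type*) [Group G] : Prop :=
  Nat.card (Subgroup.center G) = p ∧
  Nontrivial (G ⧸ Subgroup.center G) ∧
  (∀ a b : G ⧸ Subgroup.center G, a * b = b * a) ∧
  (∀ a : G ⧸ Subgroup.center G, a ^ p = 1)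

/-! Conjugation by `g ∈ P` restricts to an automorphism of `X` which is central: it moves each
element only by a factor from `Z(X)`. A central automorphism `σ` of `X` is determined by the
homomorphism `w ↦ σ w * w⁻¹` from `X / X' = X / Z(X)` to the cyclic group `Z(X)`, so there are at
most `|X / Z(X)|` of them, which is exactly the number of inner automorphisms. Hence conjugation by
`g` agrees on `X` with conjugation by some `x ∈ X`, and `x⁻¹ * g` centralizes `X`. -/

open scoped commutatorElement IsMulCommutative

open Subgroup

theorem card_monoidHom_le_of_isCyclic (Q C : Type*) [CommGroup Q] [Finite Q] [Group C]
    [IsCyclic C] [Finite C] : Nat.card (Q →* C) ≤ Nat.card Q := by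
  have : NeZero (Nat.card C) := ⟨Nat.card_pos.ne'⟩
  have : NeZero (Monoid.exponent Q) := ⟨Monoid.exponent_ne_zero_of_finite⟩
  -- `C` embeds into `ℂˣ` as the `|C|`-th roots of unity, and `ℂˣ` has enough roots of unity
  -- for `Q →* ℂˣ` to have exactly `|Q|` elements
  let e : C ≃* rootsOfUnity (Nat.card C) ℂ :=
    mulEquivOfCyclicCardEq (Complex.card_rootsOfUnity _).symm
  let ι : C →* ℂˣ := (rootsOfUnity (Nat.card C) ℂ).subtype.comp e.toMonoidHom
  have hι : Function.Injective ι := Subtype.val_injective.comp e.injective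
  calc Nat.card (Q →* C) ≤ Nat.card (Q →* ℂˣ) :=
        Nat.card_le_card_of_injective ι.comp fun f f' h =>
          MonoidHom.ext fun q => hι (DFunLike.congr_fun h q)
    _ = Nat.card Q := CommGroup.card_monoidHom_of_hasEnoughRootsOfUnity Q ℂ

section

variable {G : Type*} [Group G]

theorem MulAut.ker_conj : (MulAut.conj : G →* MulAut G).ker = center G := by
  ext x
  simp only [MonoidHom.mem_ker, MulEquiv.ext_iff, MulAut.conj_apply, MulAut.one_apply,
    mem_center_iff]
  exact forall_congr' fun g => by rw [mul_inv_eq_iff_eq_mul, eq_comm]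

theorem MulAut.card_range_conj :
    Nat.card (MulAut.conj : G →* MulAut G).range = Nat.card (G ⧸ center G) :=
  calc Nat.card (MulAut.conj : G →* MulAut G).range = Nat.card (G ⧸ (MulAut.conj).ker) :=
        (Nat.card_congr (QuotientGroup.quotientKerEquivRange _).toEquiv).symm
    _ = Nat.card (G ⧸ center G) :=
        Nat.card_congr (QuotientGroup.quotientMulEquivOfEq MulAut.ker_conj).toEquiv

def MulAut.IsCentral (σ : MulAut G) : Prop := ∀ g, σ g * g⁻¹ ∈ center G

def MulAut.IsCentral.toCenterHom {σ : MulAut G} (hσ : σ.IsCentral) : G →* center G where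
  toFun g := ⟨σ g * g⁻¹, hσ g⟩
  map_one' := by ext; simp
  map_mul' a b := by
    ext
    have hcomm := mem_center_iff.mp (hσ b) a⁻¹
    simp only [map_mul, mul_inv_rev, MulMemClass.mk_mul_mk]
    calc σ a * σ b * (b⁻¹ * a⁻¹) = σ a * (σ b * b⁻¹ * a⁻¹) := by group
      _ = σ a * a⁻¹ * (σ b * b⁻¹) := by rw [← hcomm]; group

@[simp]
theorem MulAut.IsCentral.coe_toCenterHom_apply {σ : MulAut G} (hσ : σ.IsCentral) (g : G) :
    (hσ.toCenterHom g : G) = σ g * g⁻¹ :=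
  rfl

theorem MulAut.isCentral_conj_of_commutator_le_center (h : commutator G ≤ center G) (x : G) :
    (MulAut.conj x).IsCentral := fun g =>
  h (commutator_mem_commutator (mem_top x) (mem_top g))

end

namespace IsExtraspecial

variable {p : ℕ} {G : Type*} [Group G]

theorem commutator_le_center (hG : IsExtraspecial p G) : commutator G ≤ center G :=
  Subgroup.Normal.quotient_commutative_iff_commutator_le.mp ⟨⟨hG.2.2.1⟩⟩

theorem commutator_eq_center (hp : p.Prime) (hG : IsExtraspecial p G) :
    commutator G = center G := by
  have : Finite (center G) := Nat.finite_of_card_ne_zero (hG.1 ▸ hp.ne_zero)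
  have hne : commutator G ≠ ⊥ := fun h => by
    have : Subsingleton (G ⧸ center G) :=
      (_root_.commutator_eq_bot_iff_center_eq_top (G := G)).mp h ▸
        QuotientGroup.subsingleton_quotient_top
    exact not_nontrivial _ hG.2.1
  refine eq_of_le_of_card_ge hG.commutator_le_center ?_
  have hdvd : Nat.card (commutator G) ∣ p := hG.1 ▸ card_dvd_of_le hG.commutator_le_center
  rw [hG.1, ← (hp.eq_one_or_self_of_dvd _ hdvd).resolve_left (mt card_eq_one.mp hne)]

theorem card_setOf_isCentral_le [Finite G] (hp : p.Prime) (hG : IsExtraspecial p G) :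
    Nat.card {σ : MulAut G | σ.IsCentral} ≤ Nat.card (G ⧸ center G) := by
  have : Fact p.Prime := ⟨hp⟩
  let _ : CommGroup (G ⧸ center G) := { mul_comm := hG.2.2.1 }
  have : IsCyclic (center G) := isCyclic_of_prime_card hG.1
  have : Finite (G ⧸ center G →* center G) := .of_injective _ DFunLike.coe_injective
  let F : {σ : MulAut G | σ.IsCentral} → (G ⧸ center G →* center G) := fun σ =>
    QuotientGroup.lift _ σ.2.toCenterHom
      ((hG.commutator_eq_center hp).ge.trans (Abelianization.commutator_subset_ker _))
  have hF : Function.Injective F := fun σ τ h => by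
    ext g
    have hg := congrArg Subtype.val (DFunLike.congr_fun h (g : G ⧸ center G))
    simp only [F, QuotientGroup.lift_mk, MulAut.IsCentral.coe_toCenterHom_apply] at hg
    exact mul_right_cancel hg
  exact (Nat.card_le_card_of_injective F hF).trans (card_monoidHom_le_of_isCyclic _ _)

theorem exists_eq_conj_of_isCentral [Finite G] (hp : p.Prime) (hG : IsExtraspecial p G)
    {σ : MulAut G} (hσ : σ.IsCentral) : ∃ x, σ = MulAut.conj x := by
  have hsub : ((MulAut.conj : G →* MulAut G).range : Set (MulAut G)) ⊆
      {σ : MulAut G | σ.IsCentral} := by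
    rintro _ ⟨x, rfl⟩
    exact MulAut.isCentral_conj_of_commutator_le_center hG.commutator_le_center x
  have hle : Nat.card {σ : MulAut G | σ.IsCentral} ≤
      Nat.card ((MulAut.conj : G →* MulAut G).range : Set (MulAut G)) :=
    (hG.card_setOf_isCentral_le hp).trans MulAut.card_range_conj.ge
  rw [Nat.card_coe_set_eq, Nat.card_coe_set_eq] at hle
  have hmem : σ ∈ ((MulAut.conj : G →* MulAut G).range : Set (MulAut G)) :=
    Set.eq_of_subset_of_ncard_le hsub hle ▸ hσ
  obtain ⟨x, hx⟩ := hmem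
  exact ⟨x, hx.symm⟩

end IsExtraspecial

/-- If `X ≤ P` is an extraspecial `p`-subgroup with `[P,X] ≤ Z(X)`,
then `P = X · C_P(X)`. -/
theorem stmt_6 {p : ℕ} (hp : p.Prime) {P : Type*} [Group P] [Finite P]
    (X : Subgroup P) (hX : IsExtraspecial p X)
    (hcomm : ⁅(⊤ : Subgroup P), X⁆ ≤ X ⊓ Subgroup.centralizer (X : Set P)) :
    ∀ g : P, ∃ x ∈ X, ∃ c ∈ Subgroup.centralizer (X : Set P), g = x * c := by
  have : X.Normal := commutator_top_left_le_iff.mp (hcomm.trans inf_le_left)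
  intro g
  have hσ : (MulAut.conjNormal g : MulAut X).IsCentral := fun w => by
    have hgw := hcomm (commutator_mem_commutator (mem_top g) w.2)
    refine mem_center_iff.mpr fun v => Subtype.ext ?_
    simpa [MulAut.conjNormal_apply, commutatorElement_def] using
      (mem_centralizer_iff.mp hgw.2 v v.2)
  obtain ⟨x, hx⟩ := hX.exists_eq_conj_of_isCentral hp hσ
  refine ⟨x, x.2, (x : P)⁻¹ * g, mem_centralizer_iff.mpr fun m hm => ?_, by group⟩
  have hconj : (x : P) * m * (x : P)⁻¹ = g * m * g⁻¹ := by
    simpa [MulAut.conjNormal_apply] using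
      congrArg Subtype.val (MulEquiv.congr_fun hx ⟨m, hm⟩).symm
  calc m * ((x : P)⁻¹ * g) = (x : P)⁻¹ * ((x : P) * m * (x : P)⁻¹) * g := by group
    _ = (x : P)⁻¹ * g * m := by rw [hconj]; group
end

section
/- Let p be an odd prime and P a finite noncyclic p-group with cyclic center. Then P has a normal elementary abelian subgroup N of order p², and [P,N] = Ω₁(Z(P)). -/
/-!
Let `Ω = Ω₁(Z(P))`; it has order `p` because `Z(P)` is cyclic, and `P/Ω` is not cyclic, since
otherwise `P` would be abelian. By induction on `|G|`, every noncyclic `p`-group `G` (`p` odd) has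
a normal elementary abelian subgroup of order `p²`. Take a central `W` of order `p`. If `G/W` is
cyclic, `G` is abelian and `W⟨t⟩` works, for `t` of order `p` in `⟨g⟩` with `gW` generating `G/W`.
Otherwise lift such a subgroup of `G/W` to `M` of order `p³`. As `[M, M] ≤ W` is central of
exponent `p` and `p ∣ (p choose 2)`, the map `x ↦ xᵖ` is a homomorphism `M → W`; its kernel `E` is
normal of exponent `p` and order at least `p²`. The nontrivial normal subgroup `EW/W` of `G/W`
meets `Z(G/W)` in some `tW ≠ 1`, and `N = W⟨t⟩` is normal, elementary abelian of order `p²`, with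
`[G, N] ≤ W`. For `W = Ω` the subgroup `N` is not central, as its central elements would lie in
`Ω`; so `[P, N]` is a nontrivial subgroup of `Ω`, hence equal to it.
-/

open Subgroup QuotientGroup

section

variable {G : Type*} [Group G]

theorem Subgroup.normal_of_le_center {H : Subgroup G} (h : H ≤ center G) : H.Normal :=
  ⟨fun n hn g => by rwa [mem_center_iff.mp (h hn) g, mul_inv_cancel_right]⟩

section CentralCommutator

variable {x y c : G}

theorem pow_mul_eq_of_mem_center (hc : c ∈ center G) (h : y * x = x * y * c) (n : ℕ) :
    y ^ n * x = x * y ^ n * c ^ n := by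
  have hconj : x⁻¹ * y * x⁻¹⁻¹ = y * c := by rw [inv_inv, mul_assoc, h]; group
  have hyc : Commute y c := mem_center_iff.mp hc y
  calc y ^ n * x = x * (x⁻¹ * y * x⁻¹⁻¹) ^ n := by rw [conj_pow]; group
    _ = x * y ^ n * c ^ n := by rw [hconj, hyc.mul_pow, mul_assoc]

theorem mul_pow_eq_of_mem_center (hc : c ∈ center G) (h : y * x = x * y * c) (n : ℕ) :
    (x * y) ^ n = x ^ n * y ^ n * c ^ n.choose 2 := by
  have hcentral : ∀ k : ℕ, ∀ g : G, c ^ k * g = g * c ^ k :=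
    fun k g => (mem_center_iff.mp (pow_mem hc k) g).symm
  induction n with
  | zero => simp
  | succ n ih =>
    calc (x * y) ^ (n + 1) = x ^ n * y ^ n * c ^ n.choose 2 * (x * y) := by rw [pow_succ, ih]
      _ = x ^ n * (y ^ n * x) * y * c ^ n.choose 2 := by
        rw [mul_assoc _ (c ^ _), hcentral]; group
      _ = x ^ (n + 1) * y ^ n * (c ^ n * y) * c ^ n.choose 2 := by
        rw [pow_mul_eq_of_mem_center hc h]; group
      _ = x ^ (n + 1) * y ^ (n + 1) * c ^ (n + 1).choose 2 := by
        rw [hcentral, Nat.choose_succ_succ', Nat.choose_one_right]; group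

theorem mul_pow_eq_of_mem_center_of_odd {p : ℕ} (hp : Odd p) (hc : c ∈ center G) (hcp : c ^ p = 1)
    (h : y * x = x * y * c) : (x * y) ^ p = x ^ p * y ^ p := by
  obtain ⟨k, rfl⟩ := hp
  have hchoose : (2 * k + 1).choose 2 = (2 * k + 1) * k := by
    rw [Nat.choose_two_right, Nat.add_sub_cancel, mul_left_comm, Nat.mul_div_cancel_left _ two_pos]
  rw [mul_pow_eq_of_mem_center hc h, hchoose, pow_mul, hcp, one_pow, mul_one]

end CentralCommutator

theorem IsPGroup.exists_ne_one_mem_center_of_normal {p : ℕ} [Fact p.Prime] [Finite G]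
    (hG : IsPGroup p G) (H : Subgroup G) [H.Normal] (hH : H ≠ ⊥) :
    ∃ h ∈ H, h ≠ 1 ∧ h ∈ center G := by
  have : Nontrivial H := (nontrivial_iff_ne_bot H).mpr hH
  have hpH : p ∣ Nat.card H := (hG.to_subgroup H).card_eq_or_dvd.resolve_left Finite.one_lt_card.ne'
  obtain ⟨h, hfix, hne⟩ :=
    (hG.of_equiv ConjAct.toConjAct).exists_fixed_point_of_prime_dvd_card_of_fixed_point
      H hpH (a := 1) fun g => smul_one g
  refine ⟨h, h.2, fun h1 => hne (Subtype.ext h1.symm), mem_center_iff.mpr fun g => ?_⟩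
  have hconj := congrArg Subtype.val (hfix (ConjAct.toConjAct g))
  rw [ConjAct.Subgroup.val_conj_smul, ConjAct.toConjAct_smul] at hconj
  exact mul_inv_eq_iff_eq_mul.mp hconj

theorem QuotientGroup.card_comap_mk' [Finite G] (W : Subgroup G) [W.Normal] (H : Subgroup (G ⧸ W)) :
    Nat.card (H.comap (mk' W)) = Nat.card H * Nat.card W := by
  have hM := (H.comap (mk' W)).card_mul_index
  rw [index_comap_of_surjective H (mk'_surjective W)] at hM
  refine Nat.eq_of_mul_eq_mul_right (Nat.pos_of_ne_zero H.index_ne_zero_of_finite) ?_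
  rw [hM, card_eq_card_quotient_mul_card_subgroup W, ← H.card_mul_index]
  ring

theorem Subgroup.pow_eq_one_of_card_eq {H : Subgroup G} {n : ℕ} (hH : Nat.card H = n) {x : G}
    (hx : x ∈ H) : x ^ n = 1 := by
  simpa [hH] using congrArg Subtype.val (pow_card_eq_one' (x := (⟨x, hx⟩ : H)))

structure IsNormalElemAbelianSq (p : ℕ) (N : Subgroup G) : Prop where
  normal : N.Normal
  card_eq : Nat.card N = p ^ 2
  pow_eq_one : ∀ x ∈ N, x ^ p = 1
  mul_comm : ∀ a ∈ N, ∀ b ∈ N, a * b = b * a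

theorem exists_normal_pow_eq_one_of_commutator_le [Finite G] {p : ℕ} (hodd : Odd p)
    {W : Subgroup G} (hWc : W ≤ center G) (hW : Nat.card W = p) (M : Subgroup G) [M.Normal]
    (hMp : ∀ x ∈ M, x ^ p ∈ W) (hMc : ⁅M, M⁆ ≤ W) :
    ∃ E : Subgroup G, E.Normal ∧ (∀ x ∈ E, x ^ p = 1) ∧ Nat.card M ≤ p * Nat.card E := by
  let φ : M →* G := MonoidHom.mk' (fun m => (m : G) ^ p) fun a b => by
    have hc := hMc (commutator_mem_commutator (inv_mem b.2) (inv_mem a.2))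
    exact mul_pow_eq_of_mem_center_of_odd hodd (hWc hc) (pow_eq_one_of_card_eq hW hc)
      (by simp only [commutatorElement_def, inv_inv]; group)
  have hE : ∀ x, x ∈ φ.ker.map M.subtype ↔ x ∈ M ∧ x ^ p = 1 := fun x =>
    ⟨by rintro ⟨m, hm, rfl⟩; exact ⟨m.2, hm⟩, fun ⟨hx, hxp⟩ => ⟨⟨x, hx⟩, hxp, rfl⟩⟩
  refine ⟨φ.ker.map M.subtype, ⟨fun x hx g => ?_⟩, fun x hx => ((hE x).mp hx).2, ?_⟩
  · obtain ⟨hxM, hxp⟩ := (hE x).mp hx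
    exact (hE _).mpr ⟨‹M.Normal›.conj_mem x hxM g, by rw [conj_pow, hxp, mul_one, mul_inv_cancel]⟩
  · have hrange : φ.range ≤ W := by rintro _ ⟨m, rfl⟩; exact hMp m m.2
    calc Nat.card M = Nat.card φ.ker * Nat.card φ.range := by rw [← index_ker, card_mul_index]
      _ ≤ Nat.card φ.ker * p := Nat.mul_le_mul_left _ (hW ▸ card_le_of_le hrange)
      _ = p * Nat.card (φ.ker.map M.subtype) := by
        rw [card_map_of_injective M.subtype_injective, mul_comm]

section CentralSubgroup

variable {p : ℕ} [Fact p.Prime] [Finite G] {W : Subgroup G} [W.Normal]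

theorem exists_isNormalElemAbelianSq_of_mk_mem_center (hWc : W ≤ center G)
    (hW : Nat.card W = p) {t : G} (htp : t ^ p = 1) (htW : t ∉ W)
    (ht : (t : G ⧸ W) ∈ center (G ⧸ W)) :
    ∃ N : Subgroup G, IsNormalElemAbelianSq p N ∧ ⁅(⊤ : Subgroup G), N⁆ ≤ W := by
  have hcen : zpowers (t : G ⧸ W) ≤ center (G ⧸ W) := zpowers_le.mpr ht
  have hWcomm : ∀ w ∈ W, ∀ g : G, Commute w g := fun w hw g => (mem_center_iff.mp (hWc hw) g).symm
  have hmem : ∀ x ∈ (zpowers (t : G ⧸ W)).comap (mk' W), ∃ k : ℤ, ∃ w ∈ W, x = t ^ k * w := by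
    intro x hx
    obtain ⟨k, hk⟩ := mem_zpowers_iff.mp (mem_comap.mp hx)
    exact ⟨k, (t ^ k)⁻¹ * x, QuotientGroup.eq.mp (by simpa using hk), by group⟩
  refine ⟨(zpowers (t : G ⧸ W)).comap (mk' W), ⟨?_, ?_, ?_, ?_⟩, ?_⟩
  · exact (normal_of_le_center hcen).comap _
  · have htW' : (t : G ⧸ W) ≠ 1 := by rwa [Ne, eq_one_iff]
    rw [card_comap_mk', Nat.card_zpowers, orderOf_eq_prime (by rw [← mk_pow, htp, mk_one]) htW',
      hW, sq]
  · intro x hx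
    obtain ⟨k, w, hw, rfl⟩ := hmem x hx
    rw [(hWcomm w hw _).symm.mul_pow, pow_eq_one_of_card_eq hW hw, ← zpow_natCast, ← zpow_mul,
      mul_comm, zpow_mul, zpow_natCast, htp, one_zpow, one_mul]
  · intro a ha b hb
    obtain ⟨k, w, hw, rfl⟩ := hmem a ha
    obtain ⟨l, w', hw', rfl⟩ := hmem b hb
    exact Commute.eq <| ((Commute.zpow_zpow_self t k l).mul_right (hWcomm w' hw' _).symm).mul_left
      (hWcomm w hw _)
  · refine commutator_le.mpr fun g _ n hn => (eq_one_iff _).mp ?_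
    rw [← mk'_apply, map_commutatorElement, commutatorElement_eq_one_iff_mul_comm]
    exact mem_center_iff.mp (hcen hn) _

theorem exists_isNormalElemAbelianSq_of_normal_pow_eq_one (hG : IsPGroup p G)
    (hWc : W ≤ center G) (hW : Nat.card W = p) (E : Subgroup G) [E.Normal]
    (hEp : ∀ x ∈ E, x ^ p = 1) (hEW : ¬ E ≤ W) :
    ∃ N : Subgroup G, IsNormalElemAbelianSq p N ∧ ⁅(⊤ : Subgroup G), N⁆ ≤ W := by
  have hEbar : E.map (mk' W) ≠ ⊥ := by rwa [Ne, Subgroup.map_eq_bot_iff, ker_mk']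
  have : (E.map (mk' W)).Normal := ‹E.Normal›.map _ (mk'_surjective W)
  obtain ⟨_, ⟨t, htE, rfl⟩, ht1, htc⟩ :=
    (hG.to_quotient W).exists_ne_one_mem_center_of_normal _ hEbar
  exact exists_isNormalElemAbelianSq_of_mk_mem_center hWc hW (hEp t htE)
    (by rwa [Ne, mk'_apply, eq_one_iff] at ht1) htc

theorem exists_isNormalElemAbelianSq_of_quotient (hodd : Odd p) (hG : IsPGroup p G)
    (hWc : W ≤ center G) (hW : Nat.card W = p) {Nb : Subgroup (G ⧸ W)}
    (hNb : IsNormalElemAbelianSq p Nb) :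
    ∃ N : Subgroup G, IsNormalElemAbelianSq p N ∧ ⁅(⊤ : Subgroup G), N⁆ ≤ W := by
  have := hNb.normal.comap (mk' W)
  have hMp : ∀ x ∈ Nb.comap (mk' W), x ^ p ∈ W := fun x hx =>
    (eq_one_iff _).mp (by rw [mk_pow]; exact hNb.pow_eq_one _ hx)
  have hMc : ⁅Nb.comap (mk' W), Nb.comap (mk' W)⁆ ≤ W := commutator_le.mpr fun x hx y hy =>
    (eq_one_iff _).mp (by
      rw [← mk'_apply, map_commutatorElement, commutatorElement_eq_one_iff_mul_comm]
      exact hNb.mul_comm _ hx _ hy)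
  obtain ⟨E, hEn, hEp, hME⟩ := exists_normal_pow_eq_one_of_commutator_le hodd hWc hW _ hMp hMc
  refine exists_isNormalElemAbelianSq_of_normal_pow_eq_one hG hWc hW E hEp fun hEW => ?_
  have hEcard := Nat.mul_le_mul_left p (card_le_of_le hEW)
  rw [card_comap_mk', hNb.card_eq, hW] at hME
  rw [hW] at hEcard
  nlinarith [(Fact.out : p.Prime).two_le]

theorem exists_isNormalElemAbelianSq_of_isCyclic_quotient (hG : IsPGroup p G)
    (hnc : ¬ IsCyclic G) (hWc : W ≤ center G) (hW : Nat.card W = p) [IsCyclic (G ⧸ W)] :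
    ∃ N : Subgroup G, IsNormalElemAbelianSq p N := by
  have hcomm : ∀ a b : G, a * b = b * a :=
    (MonoidHom.isMulCommutative_of_isCyclic_of_ker_le_center (mk' W)
      (by rwa [ker_mk'])).is_comm.comm
  obtain ⟨_, hgen⟩ := IsCyclic.exists_generator (α := G ⧸ W)
  obtain ⟨g, rfl⟩ := mk_surjective ‹G ⧸ W›
  have hdecomp : ∀ x : G, ∃ k : ℤ, (g ^ k)⁻¹ * x ∈ W := fun x =>
    let ⟨k, hk⟩ := mem_zpowers_iff.mp (hgen x)
    ⟨k, QuotientGroup.eq.mp (by simpa using hk)⟩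
  have hcyc_of_le : W ≤ zpowers g → IsCyclic G := fun hle =>
    ⟨⟨g, fun x => by
      obtain ⟨k, hk⟩ := hdecomp x
      obtain ⟨m, hm⟩ := mem_zpowers_iff.mp (mul_mem (zpow_mem (mem_zpowers g) k) (hle hk))
      exact ⟨m, by simpa using hm⟩⟩⟩
  have hgW : g ∉ W := fun hg => by
    have hWtop : W = ⊤ := eq_top_iff.mpr fun x _ => by
      obtain ⟨k, hk⟩ := hdecomp x
      simpa using mul_mem (zpow_mem hg k) hk
    exact hnc (isCyclic_of_prime_card (p := p) (by rw [← hW, hWtop, card_top]))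
  set t := g ^ (orderOf g / p)
  have ht : orderOf t = p :=
    orderOf_pow_orderOf_div (orderOf_pos g).ne' (hG.dvd_orderOf fun h => hgW (h ▸ one_mem W))
  have htW : t ∉ W := fun htW => hnc <| hcyc_of_le <| by
    rw [← eq_of_le_of_card_ge (zpowers_le.mpr htW) (by rw [Nat.card_zpowers, ht, hW])]
    exact zpowers_le.mpr (pow_mem (mem_zpowers g) _)
  have htc : (t : G ⧸ W) ∈ center (G ⧸ W) := mem_center_iff.mpr fun y =>
    QuotientGroup.induction_on y fun a => by rw [← mk_mul, ← mk_mul, hcomm]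
  obtain ⟨N, hN, -⟩ :=
    exists_isNormalElemAbelianSq_of_mk_mem_center hWc hW (ht ▸ pow_orderOf_eq_one t) htW htc
  exact ⟨N, hN⟩

end CentralSubgroup

theorem IsPGroup.exists_isNormalElemAbelianSq {p : ℕ} [Fact p.Prime] [Finite G] (hodd : Odd p)
    (hG : IsPGroup p G) (hnc : ¬ IsCyclic G) : ∃ N : Subgroup G, IsNormalElemAbelianSq p N := by
  induction h : Nat.card G using Nat.strong_induction_on generalizing G with
  | _ n ih =>
  have : Nontrivial G := not_subsingleton_iff_nontrivial.mp fun _ => hnc isCyclic_of_subsingleton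
  have := hG.center_nontrivial
  obtain ⟨a, ha⟩ := exists_prime_orderOf_dvd_card' (G := center G) p
    ((hG.to_subgroup _).card_eq_or_dvd.resolve_left Finite.one_lt_card.ne')
  set W := zpowers (a : G)
  have hWc : W ≤ center G := zpowers_le.mpr a.2
  have hW : Nat.card W = p := by rw [Nat.card_zpowers, orderOf_coe, ha]
  have := normal_of_le_center hWc
  by_cases hcyc : IsCyclic (G ⧸ W)
  · exact exists_isNormalElemAbelianSq_of_isCyclic_quotient hG hnc hWc hW
  · have hlt : Nat.card (G ⧸ W) < n := by
      rw [← h, card_eq_card_quotient_mul_card_subgroup W, hW]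
      exact lt_mul_of_one_lt_right Nat.card_pos (Fact.out : p.Prime).one_lt
    obtain ⟨Nb, hNb⟩ := ih _ hlt (hG.to_quotient _) hcyc rfl
    obtain ⟨N, hN, -⟩ := exists_isNormalElemAbelianSq_of_quotient hodd hG hWc hW hNb
    exact ⟨N, hN⟩

open scoped IsMulCommutative in
theorem IsPGroup.card_closure_mem_center_pow_eq_one {p : ℕ} [Fact p.Prime] [Finite G]
    (hG : IsPGroup p G) [Nontrivial G] [IsCyclic (center G)] :
    Nat.card (closure {x : G | x ∈ center G ∧ x ^ p = 1}) = p := by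
  have := hG.center_nontrivial
  have hΩ : closure {x : G | x ∈ center G ∧ x ^ p = 1} =
      (powMonoidHom p : center G →* center G).ker.map (center G).subtype := by
    rw [← closure_eq (Subgroup.map _ _)]
    congr 1
    ext x
    simp [Subtype.ext_iff, and_comm]
  rw [hΩ, card_map_of_injective (subtype_injective _), IsCyclic.card_powMonoidHom_ker,
    Nat.gcd_eq_right ((hG.to_subgroup _).card_eq_or_dvd.resolve_left Finite.one_lt_card.ne')]

theorem isCyclic_of_isCyclic_quotient_of_le_center {W : Subgroup G} [W.Normal]
    (hWc : W ≤ center G) [IsCyclic (G ⧸ W)] [IsCyclic (center G)] : IsCyclic G := by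
  have := MonoidHom.isMulCommutative_of_isCyclic_of_ker_le_center (mk' W) (by rwa [ker_mk'])
  refine isCyclic_of_surjective (center G).subtype fun x => ⟨⟨x, ?_⟩, rfl⟩
  exact mem_center_iff.mpr fun g => this.is_comm.comm g x

theorem commutator_top_eq_of_not_le_center [Finite G] {W N : Subgroup G} (hW : (Nat.card W).Prime)
    (hNW : ⁅(⊤ : Subgroup G), N⁆ ≤ W) (hN : ¬ N ≤ center G) : ⁅(⊤ : Subgroup G), N⁆ = W := by
  have hne : ⁅(⊤ : Subgroup G), N⁆ ≠ ⊥ := by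
    rwa [Ne, commutator_eq_bot_iff_le_centralizer, top_le_iff, centralizer_eq_top_iff_subset]
  rcases hW.eq_one_or_self_of_dvd _ (card_dvd_of_le hNW) with h | h
  · exact absurd (card_eq_one.mp h) hne
  · exact eq_of_le_of_card_ge hNW h.ge

end

/-- Let `p` be an odd prime and `P` a finite noncyclic `p`-group with cyclic
center. Then `P` has a normal elementary abelian subgroup `N` of order `p²`,
and `[P,N] = Ω₁(Z(P))`. -/
theorem stmt_9 {p : ℕ} (hp : p.Prime) (hodd : Odd p)
    {P : Type*} [Group P] [Finite P] (hP : IsPGroup p P) (hnc : ¬ IsCyclic P)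
    (hcyc : IsCyclic (Subgroup.center P)) :
    ∃ N : Subgroup P, N.Normal ∧ Nat.card N = p ^ 2 ∧
      (∀ x ∈ N, x ^ p = 1) ∧ (∀ a ∈ N, ∀ b ∈ N, a * b = b * a) ∧
      ⁅(⊤ : Subgroup P), N⁆ =
        Subgroup.closure {x : P | x ∈ Subgroup.center P ∧ x ^ p = 1} := by
  have := Fact.mk hp
  have : Nontrivial P := not_subsingleton_iff_nontrivial.mp fun _ => hnc isCyclic_of_subsingleton
  set Ω := closure {x : P | x ∈ center P ∧ x ^ p = 1}
  have hΩc : Ω ≤ center P := (closure_le _).mpr fun x hx => hx.1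
  have := normal_of_le_center hΩc
  have hΩ : Nat.card Ω = p := hP.card_closure_mem_center_pow_eq_one
  have hncΩ : ¬ IsCyclic (P ⧸ Ω) := fun _ => hnc (isCyclic_of_isCyclic_quotient_of_le_center hΩc)
  obtain ⟨Nb, hNb⟩ := (hP.to_quotient Ω).exists_isNormalElemAbelianSq hodd hncΩ
  obtain ⟨N, hN, hNΩ⟩ := exists_isNormalElemAbelianSq_of_quotient hodd hP hΩc hΩ hNb
  refine ⟨N, hN.normal, hN.card_eq, hN.pow_eq_one, hN.mul_comm,
    commutator_top_eq_of_not_le_center (hΩ ▸ hp) hNΩ fun hNc => ?_⟩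
  have hcard := card_le_of_le
    (show N ≤ Ω from fun x hx => subset_closure ⟨hNc hx, hN.pow_eq_one x hx⟩)
  rw [hN.card_eq, hΩ] at hcard
  nlinarith [hp.two_le]
end

section
/- Let p be an odd prime, P a finite noncyclic p-group with cyclic center, Z = Ω₁(Z(P)), and let N be a normal elementary abelian subgroup of P of order p². Then every maximal element S of the poset ℳ_Z(P) = {X ≤ P : Z < X = Ω₁(X), [X,X] ≤ Z} contains N. -/
/-!
As `P` is nilpotent and `N ≠ 1`, `[N, P]` is a proper subgroup of `N`, so it is a normal subgroup
of order at most `p` and therefore central; lying in `N`, it has exponent `p`, so `[N, P] ≤ Z`.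
Hence `NS` is again in `ℳ_Z(P)`: it is generated by elements of order `p`, and modulo `Z` it is
abelian because the image of `N` is central and that of `S` is abelian. Maximality gives `NS = S`.
-/

open Subgroup

namespace Subgroup

variable {G : Type*} [Group G]

theorem commutator_top_ne_self_of_isNilpotent [Group.IsNilpotent G] {H : Subgroup G}
    (hH : H ≠ ⊥) : ⁅H, ⊤⁆ ≠ H := by
  intro hfix
  obtain ⟨n, hn⟩ := Subgroup.nilpotent_iff_lowerCentralSeries.mp ‹Group.IsNilpotent G›
  have hle : ∀ k, H ≤ (⊤ : Subgroup G).lowerCentralSeries k := by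
    intro k
    induction k with
    | zero => exact le_top
    | succ k ih =>
      rw [lowerCentralSeries_succ, ← hfix]
      exact commutator_mono ih le_rfl
  exact hH (le_bot_iff.mp (hn ▸ hle n))

theorem normal_of_le_center_s10 {K : Subgroup G} (hK : K ≤ center G) : K.Normal :=
  ⟨fun n hn g ↦ by rwa [mem_center_iff.mp (hK hn) g, mul_inv_cancel_right]⟩

theorem commutator_sup_le_of_commutator_top_le {A B K : Subgroup G} [K.Normal]
    (hA : ⁅A, ⊤⁆ ≤ K) (hB : ⁅B, B⁆ ≤ K) : ⁅A ⊔ B, A ⊔ B⁆ ≤ K := by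
  have hmap : ∀ H₁ H₂ : Subgroup G,
      ⁅H₁, H₂⁆ ≤ K ↔ ⁅H₁.map (QuotientGroup.mk' K), H₂.map (QuotientGroup.mk' K)⁆ = ⊥ := by
    intro H₁ H₂
    rw [← map_commutator, map_eq_bot_iff, QuotientGroup.ker_mk']
  rw [hmap, map_top_of_surjective _ (QuotientGroup.mk'_surjective K),
    commutator_eq_bot_iff_le_centralizer, coe_top, centralizer_univ] at hA
  rw [hmap, commutator_eq_bot_iff_le_centralizer] at hB
  rw [hmap, map_sup, commutator_eq_bot_iff_le_centralizer]
  exact sup_le (hA.trans (center_le_centralizer _))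
    (le_centralizer_iff.mpr (sup_le (hA.trans (center_le_centralizer _)) hB))

theorem sup_eq_closure_pow_eq_one {A B : Subgroup G} {n : ℕ}
    (hA : A = closure {x | x ∈ A ∧ x ^ n = 1}) (hB : B = closure {x | x ∈ B ∧ x ^ n = 1}) :
    A ⊔ B = closure {x | x ∈ A ⊔ B ∧ x ^ n = 1} := by
  refine le_antisymm (sup_le ?_ ?_) ((closure_le _).mpr fun _ hx ↦ hx.1)
  · exact hA.le.trans (closure_mono fun x hx ↦ ⟨mem_sup_left hx.1, hx.2⟩)
  · exact hB.le.trans (closure_mono fun x hx ↦ ⟨mem_sup_right hx.1, hx.2⟩)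

theorem eq_closure_pow_eq_one_of_pow_eq_one {A : Subgroup G} {n : ℕ}
    (hA : ∀ x ∈ A, x ^ n = 1) : A = closure {x | x ∈ A ∧ x ^ n = 1} :=
  le_antisymm (fun x hx ↦ subset_closure (k := {x | x ∈ A ∧ x ^ n = 1}) ⟨hx, hA x hx⟩)
    ((closure_le _).mpr fun _ hx ↦ hx.1)

end Subgroup

namespace IsPGroup

variable {p : ℕ} [Fact p.Prime] {G : Type*} [Group G] [Finite G]

theorem inf_center_ne_bot (hG : IsPGroup p G) {H : Subgroup G} [H.Normal] (hH : H ≠ ⊥) :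
    H ⊓ center G ≠ ⊥ := by
  have hdvd : p ∣ Nat.card H := by
    obtain ⟨k, hk, hcard⟩ := (hG.to_subgroup H).nontrivial_iff_card.mp
      ((nontrivial_iff_ne_bot H).mpr hH)
    exact hcard ▸ dvd_pow_self p hk.ne'
  have hone : (1 : H) ∈ MulAction.fixedPoints (ConjAct G) H := fun g ↦ by ext; simp
  obtain ⟨b, hb, hb1⟩ :=
    (hG.of_equiv ConjAct.toConjAct).exists_fixed_point_of_prime_dvd_card_of_fixed_point H hdvd hone
  refine ne_bot_iff_exists_ne_one.mpr ⟨⟨b, b.2, mem_center_iff.mpr fun g ↦ ?_⟩,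
    fun h ↦ hb1 (Subtype.ext (congrArg Subtype.val h).symm)⟩
  have hconj := congrArg Subtype.val (hb (ConjAct.toConjAct g))
  rw [ConjAct.Subgroup.val_conj_smul, ConjAct.toConjAct_smul, mul_inv_eq_iff_eq_mul] at hconj
  exact hconj

theorem le_center_of_card_eq_prime (hG : IsPGroup p G) {H : Subgroup G} [H.Normal]
    (hH : Nat.card H = p) : H ≤ center G := by
  have hbot : H ≠ ⊥ := by
    rw [← one_lt_card_iff_ne_bot, hH]
    exact (Fact.out : p.Prime).one_lt
  have hdvd : Nat.card ↥(H ⊓ center G) ∣ p := hH ▸ card_dvd_of_le inf_le_left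
  have hcard : Nat.card ↥(H ⊓ center G) = p :=
    ((Nat.dvd_prime Fact.out).mp hdvd).resolve_left fun h ↦
      hG.inf_center_ne_bot hbot (eq_bot_of_card_eq _ h)
  exact inf_eq_left.mp (eq_of_le_of_card_ge inf_le_left (hH.trans hcard.symm).le)

theorem commutator_top_le_center_of_card_eq_sq (hG : IsPGroup p G) {N : Subgroup G} [N.Normal]
    (hN : Nat.card N = p ^ 2) : ⁅N, ⊤⁆ ≤ center G := by
  have : Group.IsNilpotent G := hG.isNilpotent
  have hbot : N ≠ ⊥ := by
    rw [← one_lt_card_iff_ne_bot, hN]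
    exact Nat.one_lt_pow two_ne_zero (Fact.out : p.Prime).one_lt
  have hne : Nat.card (⁅N, ⊤⁆ : Subgroup G) ≠ p ^ 2 := fun h ↦
    commutator_top_ne_self_of_isNilpotent hbot
      (eq_of_le_of_card_ge (commutator_le_left N ⊤) (hN.trans h.symm).le)
  obtain ⟨i, hi, hcard⟩ :=
    (Nat.dvd_prime_pow Fact.out).mp (hN ▸ card_dvd_of_le (commutator_le_left N ⊤))
  interval_cases i
  · simp [eq_bot_of_card_eq ⁅N, ⊤⁆ hcard]
  · exact hG.le_center_of_card_eq_prime (pow_one p ▸ hcard)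
  · exact absurd hcard hne

end IsPGroup

theorem stmt_10_general {p : ℕ} (hp : p.Prime)
    {P : Type*} [Group P] [Finite P] (hP : IsPGroup p P)
    (Z : Subgroup P)
    (hZ : Z = Subgroup.closure {x : P | x ∈ Subgroup.center P ∧ x ^ p = 1})
    (N : Subgroup P) (hN : N.Normal) (hNcard : Nat.card N = p ^ 2)
    (hNexp : ∀ x ∈ N, x ^ p = 1)
    (S : Subgroup P)
    (hS₁ : Z < S) (hS₂ : S = Subgroup.closure {x : P | x ∈ S ∧ x ^ p = 1})
    (hS₃ : ⁅S, S⁆ ≤ Z)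
    (hSmax : ∀ T : Subgroup P, Z < T →
      T = Subgroup.closure {x : P | x ∈ T ∧ x ^ p = 1} →
      ⁅T, T⁆ ≤ Z → S ≤ T → T = S) :
    N ≤ S := by
  have : Fact p.Prime := ⟨hp⟩
  have hZcenter : Z ≤ center P := hZ ▸ (closure_le _).mpr fun _ hx ↦ hx.1
  have : Z.Normal := normal_of_le_center_s10 hZcenter
  have hNZ : ⁅N, ⊤⁆ ≤ Z := fun x hx ↦ hZ ▸ subset_closure
    ⟨hP.commutator_top_le_center_of_card_eq_sq hNcard hx, hNexp x (commutator_le_left N ⊤ hx)⟩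
  have hT : N ⊔ S = S := hSmax (N ⊔ S) (hS₁.trans_le le_sup_right)
    (sup_eq_closure_pow_eq_one (eq_closure_pow_eq_one_of_pow_eq_one hNexp) hS₂)
    (commutator_sup_le_of_commutator_top_le hNZ hS₃) le_sup_right
  exact hT ▸ le_sup_left

/-- Let `p` be an odd prime, `P` a finite noncyclic `p`-group with cyclic center,
`Z = Ω₁(Z(P))`, and `N ⊴ P` elementary abelian of order `p²`. Then every maximal
element `S` of `ℳ_Z(P) = {X ≤ P : Z < X = Ω₁(X), [X,X] ≤ Z}` contains `N`. -/
theorem stmt_10 {p : ℕ} (hp : p.Prime) (hodd : Odd p)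
    {P : Type*} [Group P] [Finite P] (hP : IsPGroup p P) (hnc : ¬ IsCyclic P)
    (hcyc : IsCyclic (Subgroup.center P))
    (Z : Subgroup P)
    (hZ : Z = Subgroup.closure {x : P | x ∈ Subgroup.center P ∧ x ^ p = 1})
    (N : Subgroup P) (hN : N.Normal) (hNcard : Nat.card N = p ^ 2)
    (hNexp : ∀ x ∈ N, x ^ p = 1) (hNab : ∀ a ∈ N, ∀ b ∈ N, a * b = b * a)
    (S : Subgroup P)
    (hS₁ : Z < S) (hS₂ : S = Subgroup.closure {x : P | x ∈ S ∧ x ^ p = 1})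
    (hS₃ : ⁅S, S⁆ ≤ Z)
    (hSmax : ∀ T : Subgroup P, Z < T →
      T = Subgroup.closure {x : P | x ∈ T ∧ x ^ p = 1} →
      ⁅T, T⁆ ≤ Z → S ≤ T → T = S) :
    N ≤ S :=
  stmt_10_general hp hP Z hZ N hN hNcard hNexp S hS₁ hS₂ hS₃ hSmax
end

section
/- Let P be a central product of subgroups P₁ and P₂ with P₁ ∩ P₂ = Z, where at least one Pᵢ has exponent p (p odd). If Xᵢ ∈ ℳ_Z(Pᵢ) for i = 1, 2 (i.e., Z < Xᵢ = Ω₁(Xᵢ) and [Xᵢ,Xᵢ] ≤ Z), then X₁X₂ ∈ ℳ_Z(P). -/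
/-!
Since `X₁` and `X₂` commute elementwise, `X₁ ⊔ X₂` is the image of `X₁ × X₂` under
`(a, b) ↦ a * b`, so its derived subgroup is generated by `[X₁, X₁]` and `[X₂, X₂]`, both inside
`Z`.
-/

namespace Subgroup

variable {G : Type*} [Group G]

theorem sup_eq_closure_of_eq_closure_setOf {H K : Subgroup G} {q : G → Prop}
    (hH : H = closure {x | x ∈ H ∧ q x}) (hK : K = closure {x | x ∈ K ∧ q x}) :
    H ⊔ K = closure {x | x ∈ H ⊔ K ∧ q x} := by
  refine le_antisymm (sup_le ?_ ?_) ((closure_le _).mpr fun x hx => hx.1)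
  · rw [hH]
    exact closure_mono fun x hx => ⟨mem_sup_left (hH ▸ subset_closure hx), hx.2⟩
  · rw [hK]
    exact closure_mono fun x hx => ⟨mem_sup_right (hK ▸ subset_closure hx), hx.2⟩

theorem commutator_sup_eq_of_commute {H K : Subgroup G}
    (hHK : ∀ a ∈ H, ∀ b ∈ K, Commute a b) :
    ⁅H ⊔ K, H ⊔ K⁆ = ⁅H, H⁆ ⊔ ⁅K, K⁆ := by
  refine le_antisymm ?_ (sup_le (commutator_mono le_sup_left le_sup_left)
    (commutator_mono le_sup_right le_sup_right))
  have hrange := MonoidHom.noncommCoprod_range H.subtype K.subtype fun a b => hHK a a.2 b b.2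
  rw [range_subtype, range_subtype] at hrange
  rw [← hrange, MonoidHom.range_eq_map, ← map_commutator, ← top_prod_top,
    commutator_prod_prod]
  rintro _ ⟨⟨a, b⟩, ⟨ha, hb⟩, rfl⟩
  refine mul_mem (mem_sup_left ?_) (mem_sup_right ?_)
  · rw [← map_subtype_commutator]
    exact mem_map_of_mem _ ha
  · rw [← map_subtype_commutator]
    exact mem_map_of_mem _ hb

end Subgroup

theorem stmt_12_general {p : ℕ}
    {P : Type*} [Group P]
    (P₁ P₂ : Subgroup P)
    (hcomm : ∀ a ∈ P₁, ∀ b ∈ P₂, a * b = b * a)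
    (Z : Subgroup P)
    (X₁ X₂ : Subgroup P) (hX₁P : X₁ ≤ P₁) (hX₂P : X₂ ≤ P₂)
    (hX₁ : Z < X₁ ∧ X₁ = Subgroup.closure {x : P | x ∈ X₁ ∧ x ^ p = 1} ∧
      ⁅X₁, X₁⁆ ≤ Z)
    (hX₂ : Z < X₂ ∧ X₂ = Subgroup.closure {x : P | x ∈ X₂ ∧ x ^ p = 1} ∧
      ⁅X₂, X₂⁆ ≤ Z) :
    Z < X₁ ⊔ X₂ ∧
      X₁ ⊔ X₂ = Subgroup.closure {x : P | x ∈ X₁ ⊔ X₂ ∧ x ^ p = 1} ∧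
      ⁅X₁ ⊔ X₂, X₁ ⊔ X₂⁆ ≤ Z := by
  obtain ⟨hZX₁, hΩX₁, hX₁'⟩ := hX₁
  obtain ⟨-, hΩX₂, hX₂'⟩ := hX₂
  have hX₁X₂ : ∀ a ∈ X₁, ∀ b ∈ X₂, Commute a b := fun a ha b hb =>
    hcomm a (hX₁P ha) b (hX₂P hb)
  refine ⟨hZX₁.trans_le le_sup_left, Subgroup.sup_eq_closure_of_eq_closure_setOf hΩX₁ hΩX₂, ?_⟩
  rw [Subgroup.commutator_sup_eq_of_commute hX₁X₂]
  exact sup_le hX₁' hX₂'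

/-- Let `P` be a central product of subgroups `P₁`, `P₂` with `P₁ ∩ P₂ = Z`
central of exponent dividing `p`, where at least one `Pᵢ` has exponent `p`
(`p` odd). If `Xᵢ ∈ ℳ_Z(Pᵢ)` for `i = 1, 2`, then `X₁X₂ ∈ ℳ_Z(P)`. -/
theorem stmt_12 {p : ℕ} (hp : p.Prime) (hodd : Odd p)
    {P : Type*} [Group P] [Finite P] (hP : IsPGroup p P)
    (P₁ P₂ : Subgroup P)
    (hprod : ∀ g : P, ∃ a ∈ P₁, ∃ b ∈ P₂, g = a * b)
    (hcomm : ∀ a ∈ P₁, ∀ b ∈ P₂, a * b = b * a)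
    (Z : Subgroup P) (hZ : P₁ ⊓ P₂ = Z)
    (hZc : Z ≤ Subgroup.center P) (hZexp : ∀ z ∈ Z, z ^ p = 1)
    (hexp : (∀ x ∈ P₁, x ^ p = 1) ∨ (∀ x ∈ P₂, x ^ p = 1))
    (X₁ X₂ : Subgroup P) (hX₁P : X₁ ≤ P₁) (hX₂P : X₂ ≤ P₂)
    (hX₁ : Z < X₁ ∧ X₁ = Subgroup.closure {x : P | x ∈ X₁ ∧ x ^ p = 1} ∧
      ⁅X₁, X₁⁆ ≤ Z)
    (hX₂ : Z < X₂ ∧ X₂ = Subgroup.closure {x : P | x ∈ X₂ ∧ x ^ p = 1} ∧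
      ⁅X₂, X₂⁆ ≤ Z) :
    Z < X₁ ⊔ X₂ ∧
      X₁ ⊔ X₂ = Subgroup.closure {x : P | x ∈ X₁ ⊔ X₂ ∧ x ^ p = 1} ∧
      ⁅X₁ ⊔ X₂, X₁ ⊔ X₂⁆ ≤ Z :=
  stmt_12_general P₁ P₂ hcomm Z X₁ X₂ hX₁P hX₂P hX₁ hX₂
end

section
/- Let V be a 2m-dimensional symplectic space over 𝔽_p with symplectic basis x̄₁,…,x̄_m, ȳ₁,…,ȳ_m (so ⟨x̄ᵢ,ȳⱼ⟩ = δᵢⱼ, ⟨x̄ᵢ,x̄ⱼ⟩ = ⟨ȳᵢ,ȳⱼ⟩ = 0). Define φ: V → V by x̄ᵢφ = (-1)^{m+1-i} ȳ_m + Σ_{j=i}^{m} (-1)^{j-i} x̄ⱼ, ȳᵢφ = ȳᵢ + ȳ_{i-1} for 2 ≤ i ≤ m, and ȳ₁φ = ȳ₁. Then φ preserves the symplectic form. -/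
/-- The standard symplectic form on `𝔽_p^{2m}`, with symplectic basis
`x̄₁,…,x̄_m` (first factor) and `ȳ₁,…,ȳ_m` (second factor). -/
def symplForm (p m : ℕ) (v w : (Fin m → ZMod p) × (Fin m → ZMod p)) : ZMod p :=
  (∑ i, v.1 i * w.2 i) - (∑ i, w.1 i * v.2 i)

/-- The linear map `φ` (0-based indices): `x̄ᵢφ = (-1)^{m+1-i} ȳ_m +
∑_{j=i}^{m} (-1)^{j-i} x̄ⱼ`, `ȳᵢφ = ȳᵢ + ȳ_{i-1}` for `i ≥ 2`, `ȳ₁φ = ȳ₁`. -/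
def phi (p m : ℕ) (v : (Fin m → ZMod p) × (Fin m → ZMod p)) :
    (Fin m → ZMod p) × (Fin m → ZMod p) :=
  (fun j => ∑ i ∈ Finset.univ.filter (fun i => i ≤ j),
      (-1 : ZMod p) ^ (j.val - i.val) * v.1 i,
   fun j => v.2 j +
     (if h : j.val + 1 < m then v.2 ⟨j.val + 1, h⟩
      else ∑ i, (-1 : ZMod p) ^ (m - i.val) * v.1 i))

/-- Auxiliary: the first component of `phi`. -/
def hsum (p m : ℕ) (X : Fin m → ZMod p) (j : Fin m) : ZMod p :=
  ∑ i ∈ Finset.univ.filter (fun i => i ≤ j), (-1 : ZMod p) ^ (j.val - i.val) * X i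

lemma neg_one_pow_sub {p : ℕ} {a b : ℕ} (h : a ≤ b) :
    ((-1 : ZMod p)) ^ (b - a) = (-1) ^ b * (-1) ^ a := by
  have h1 : ((-1 : ZMod p)) ^ (b - a) * (-1) ^ a = (-1) ^ b := by
    rw [← pow_add, Nat.sub_add_cancel h]
  have h2 : ((-1 : ZMod p)) ^ a * (-1) ^ a = 1 := by
    rw [← mul_pow]; simp
  calc ((-1 : ZMod p)) ^ (b - a) = (-1) ^ (b - a) * ((-1) ^ a * (-1) ^ a) := by
        rw [h2, mul_one]
    _ = ((-1) ^ (b - a) * (-1) ^ a) * (-1) ^ a := by ring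
    _ = (-1) ^ b * (-1) ^ a := by rw [h1]

lemma hsum_zero {p n : ℕ} (X : Fin (n+1) → ZMod p) :
    hsum p (n+1) X 0 = X 0 := by
  have hfil : Finset.univ.filter (fun i : Fin (n+1) => i ≤ 0) = {0} := by
    ext i; simp [Fin.le_zero_iff]
  rw [hsum, hfil]; simp

lemma hsum_succ {p n : ℕ} (X : Fin (n+1) → ZMod p) (j : Fin n) :
    hsum p (n+1) X j.succ + hsum p (n+1) X j.castSucc = X j.succ := by
  have hfil : Finset.univ.filter (fun i : Fin (n+1) => i ≤ j.succ)
      = insert j.succ (Finset.univ.filter (fun i : Fin (n+1) => i ≤ j.castSucc)) := by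
    ext i
    simp only [Finset.mem_filter, Finset.mem_univ, true_and, Finset.mem_insert,
      Fin.le_def, Fin.ext_iff, Fin.val_succ, Fin.coe_castSucc]
    omega
  have hnot : j.succ ∉ Finset.univ.filter (fun i : Fin (n+1) => i ≤ j.castSucc) := by
    simp [Fin.le_def]
  have hstep : hsum p (n+1) X j.succ = X j.succ - hsum p (n+1) X j.castSucc := by
    rw [hsum, hfil, Finset.sum_insert hnot]
    have h1 : ((-1 : ZMod p)) ^ (j.succ.val - j.succ.val) * X j.succ = X j.succ := by
      simp
    rw [h1]
    have h5 : ∑ x ∈ Finset.univ.filter (fun i : Fin (n+1) => i ≤ j.castSucc),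
          (-1 : ZMod p) ^ (j.succ.val - x.val) * X x
        = ∑ x ∈ Finset.univ.filter (fun i : Fin (n+1) => i ≤ j.castSucc),
          -((-1 : ZMod p) ^ (j.castSucc.val - x.val) * X x) := by
      apply Finset.sum_congr rfl
      intro i hi
      simp only [Finset.mem_filter, Finset.mem_univ, true_and, Fin.le_def,
        Fin.coe_castSucc] at hi
      have hx : j.succ.val - i.val = (j.castSucc.val - i.val) + 1 := by
        simp only [Fin.val_succ, Fin.coe_castSucc]; omega
      rw [hx, pow_succ]
      ring
    rw [h5, Finset.sum_neg_distrib, hsum]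
    ring
  rw [hstep]; ring

lemma hsum_last {p n : ℕ} (X : Fin (n+1) → ZMod p) :
    hsum p (n+1) X (Fin.last n) = (-1) ^ n * ∑ i, (-1 : ZMod p) ^ i.val * X i := by
  have hfil : Finset.univ.filter (fun i : Fin (n+1) => i ≤ Fin.last n) = Finset.univ := by
    ext i; simp [Fin.le_last]
  rw [hsum, hfil, Finset.mul_sum]
  apply Finset.sum_congr rfl
  intro i _
  have hi : i.val ≤ n := Fin.is_le i
  rw [show (Fin.last n).val = n from rfl, neg_one_pow_sub hi]
  ring

lemma clast {p n : ℕ} (X : Fin (n+1) → ZMod p) :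
    ∑ i, (-1 : ZMod p) ^ (n + 1 - i.val) * X i
      = (-1) ^ (n+1) * ∑ i, (-1 : ZMod p) ^ i.val * X i := by
  rw [Finset.mul_sum]
  apply Finset.sum_congr rfl
  intro i _
  have hi : i.val ≤ n + 1 := le_of_lt i.isLt
  rw [neg_one_pow_sub hi]
  ring

lemma keysum {p n : ℕ} (X B : Fin (n+1) → ZMod p) (C : ZMod p) :
    ∑ j, hsum p (n+1) X j *
        (B j + if h : j.val + 1 < n + 1 then B ⟨j.val + 1, h⟩ else C)
      = (∑ j, X j * B j) + hsum p (n+1) X (Fin.last n) * C := by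
  have hsplit : ∑ j, hsum p (n+1) X j *
        (B j + if h : j.val + 1 < n + 1 then B ⟨j.val + 1, h⟩ else C)
      = (∑ j, hsum p (n+1) X j * B j)
        + ∑ j, hsum p (n+1) X j *
            (if h : j.val + 1 < n + 1 then B ⟨j.val + 1, h⟩ else C) := by
    rw [← Finset.sum_add_distrib]
    apply Finset.sum_congr rfl; intro j _; ring
  rw [hsplit]
  have h2 : ∑ j, hsum p (n+1) X j *
        (if h : j.val + 1 < n + 1 then B ⟨j.val + 1, h⟩ else C)
      = (∑ j : Fin n, hsum p (n+1) X j.castSucc * B j.succ)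
        + hsum p (n+1) X (Fin.last n) * C := by
    rw [Fin.sum_univ_castSucc]
    congr 1
    · apply Finset.sum_congr rfl
      intro j _
      have hj : j.castSucc.val + 1 < n + 1 := by
        simp only [Fin.coe_castSucc]; omega
      rw [dif_pos hj]
      congr 1
    · have : ¬ ((Fin.last n).val + 1 < n + 1) := by simp
      rw [dif_neg this]
  rw [h2]
  have h1 : ∑ j, hsum p (n+1) X j * B j
      = hsum p (n+1) X 0 * B 0 + ∑ j : Fin n, hsum p (n+1) X j.succ * B j.succ := by
    rw [Fin.sum_univ_succ]
  have h3 : ∑ j : Fin (n+1), X j * B j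
      = X 0 * B 0 + ∑ j : Fin n, X j.succ * B j.succ := by
    rw [Fin.sum_univ_succ]
  rw [h1, h3, hsum_zero]
  have h4 : (∑ j : Fin n, hsum p (n+1) X j.succ * B j.succ)
        + (∑ j : Fin n, hsum p (n+1) X j.castSucc * B j.succ)
      = ∑ j : Fin n, X j.succ * B j.succ := by
    rw [← Finset.sum_add_distrib]
    apply Finset.sum_congr rfl
    intro j _
    rw [← add_mul, hsum_succ]
  linear_combination h4

/-- The map `φ` preserves the standard symplectic form on `𝔽_p^{2m}`. -/
theorem stmt_15 {p m : ℕ} (hp : p.Prime) (hm : 0 < m) :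
    ∀ v w : (Fin m → ZMod p) × (Fin m → ZMod p),
      symplForm p m (phi p m v) (phi p m w) = symplForm p m v w := by
  obtain ⟨n, rfl⟩ : ∃ n, m = n + 1 := ⟨m - 1, by omega⟩
  intro v w
  show (∑ j, hsum p (n+1) v.1 j *
        (w.2 j + if h : j.val + 1 < n + 1 then w.2 ⟨j.val + 1, h⟩
          else ∑ i, (-1 : ZMod p) ^ (n + 1 - i.val) * w.1 i))
      - (∑ j, hsum p (n+1) w.1 j *
        (v.2 j + if h : j.val + 1 < n + 1 then v.2 ⟨j.val + 1, h⟩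
          else ∑ i, (-1 : ZMod p) ^ (n + 1 - i.val) * v.1 i))
      = symplForm p (n+1) v w
  rw [keysum, keysum, hsum_last, hsum_last, clast, clast]
  unfold symplForm
  ring
end

section
/- With φ the linear map on the symplectic 𝔽_p-space V of dimension 2m defined by x̄ᵢφ = (-1)^{m+1-i} ȳ_m + Σ_{j=i}^{m} (-1)^{j-i} x̄ⱼ, ȳᵢφ = ȳᵢ + ȳ_{i-1} (2 ≤ i ≤ m), ȳ₁φ = ȳ₁: the fixed space of φ is the one-dimensional span of ȳ₁. -/
/-- The fixed space of `φ` on `𝔽_p^{2m}` is the one-dimensional span of `ȳ₁`. -/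
theorem stmt_16 {p m : ℕ} (hp : p.Prime) (hm : 0 < m) :
    ∀ v : (Fin m → ZMod p) × (Fin m → ZMod p),
      phi p m v = v ↔
        ∃ c : ZMod p, v = (0, fun j : Fin m => if j.val = 0 then c else 0) := by
  intro v
  constructor
  · intro h
    have h1 : ∀ j : Fin m, (∑ i ∈ Finset.univ.filter (fun i => i ≤ j),
        (-1 : ZMod p) ^ (j.val - i.val) * v.1 i) = v.1 j := fun j =>
      congrFun (congrArg Prod.fst h) j
    have h2 : ∀ j : Fin m, (v.2 j +
        (if hj : j.val + 1 < m then v.2 ⟨j.val + 1, hj⟩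
         else ∑ i, (-1 : ZMod p) ^ (m - i.val) * v.1 i)) = v.2 j := fun j =>
      congrFun (congrArg Prod.snd h) j
    -- Step 1: x_k = 0 for all k with k+1 < m
    have hx1 : ∀ k : ℕ, ∀ hk : k + 1 < m, v.1 ⟨k, Nat.lt_of_succ_lt hk⟩ = 0 := by
      intro k
      induction k using Nat.strong_induction_on with
      | _ k IH =>
        intro hk
        set j : Fin m := ⟨k + 1, hk⟩ with hjdef
        set a : Fin m := ⟨k, Nat.lt_of_succ_lt hk⟩ with hadef
        have hab : a ≠ j := by simp [hadef, hjdef, Fin.ext_iff]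
        have hsum := h1 j
        rw [Finset.sum_filter] at hsum
        have hrest : ∀ i : Fin m, i ∈ Finset.univ → i ∉ ({a, j} : Finset (Fin m)) →
            (if i ≤ j then (-1 : ZMod p) ^ (j.val - i.val) * v.1 i else 0) = 0 := by
          intro i _ hi
          simp only [Finset.mem_insert, Finset.mem_singleton] at hi
          push_neg at hi
          by_cases hle : i ≤ j
          · have hlt : i.val < k := by
              have h1' : i.val ≤ k + 1 := hle
              have h2' : i.val ≠ k := fun hh => hi.1 (by simp [hadef, Fin.ext_iff, hh])
              have h3' : i.val ≠ k + 1 := fun hh => hi.2 (by simp [hjdef, Fin.ext_iff, hh])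
              omega
            have hz : v.1 i = 0 := by
              have := IH i.val hlt (by omega)
              simpa [Fin.eta] using this
            simp [hle, hz]
          · simp [hle]
        have hsub : ({a, j} : Finset (Fin m)) ⊆ Finset.univ := Finset.subset_univ _
        have hsum2 : (∑ i ∈ ({a, j} : Finset (Fin m)),
            (if i ≤ j then (-1 : ZMod p) ^ (j.val - i.val) * v.1 i else 0)) = v.1 j := by
          rw [Finset.sum_subset hsub hrest]; exact hsum
        rw [Finset.sum_pair hab] at hsum2
        have haj : a ≤ j := by simp [hadef, hjdef, Fin.le_def]
        have e1 : j.val - a.val = 1 := by simp [hadef, hjdef]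
        have e2 : j.val - j.val = 0 := by omega
        rw [if_pos haj, if_pos le_rfl, e1, e2, pow_one, pow_zero, one_mul] at hsum2
        have : -v.1 a = 0 := by linear_combination hsum2
        have : v.1 a = 0 := neg_eq_zero.mp this
        simpa [hadef] using this
    -- Step 2: the last coordinate of x is also 0
    have hlast : ∀ hk : m - 1 < m, v.1 ⟨m - 1, hk⟩ = 0 := by
      intro hk
      set j : Fin m := ⟨m - 1, hk⟩ with hjdef
      have hcond : ¬ (j.val + 1 < m) := by simp [hjdef]; omega
      have hy := h2 j
      rw [dif_neg hcond] at hy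
      have hsum0 : (∑ i, (-1 : ZMod p) ^ (m - i.val) * v.1 i) = 0 := by
        linear_combination hy
      have hsingle : (∑ i, (-1 : ZMod p) ^ (m - i.val) * v.1 i)
          = (-1 : ZMod p) ^ (m - j.val) * v.1 j := by
        apply Finset.sum_eq_single
        · intro i _ hij
          have hlt : i.val + 1 < m := by
            have := i.isLt
            have : i.val ≠ m - 1 := fun hh => hij (by simp [hjdef, Fin.ext_iff, hh])
            omega
          have hz : v.1 i = 0 := by
            have := hx1 i.val hlt
            simpa [Fin.eta] using this
          simp [hz]
        · intro hj; exact absurd (Finset.mem_univ j) hj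
      have e1 : m - j.val = 1 := by simp [hjdef]; omega
      rw [hsingle, e1, pow_one] at hsum0
      have : v.1 j = 0 := neg_eq_zero.mp (by linear_combination hsum0)
      simpa [hjdef] using this
    have hxall : v.1 = 0 := by
      funext i
      by_cases hi : i.val + 1 < m
      · have := hx1 i.val hi; simpa [Fin.eta] using this
      · have hiv : i.val = m - 1 := by have := i.isLt; omega
        have := hlast (by omega)
        have hieq : i = ⟨m - 1, by omega⟩ := by simp [Fin.ext_iff, hiv]
        rw [hieq]; exact this
    -- Step 3: y_j = 0 for j.val ≥ 1
    have hy1 : ∀ j : Fin m, ∀ hj : j.val + 1 < m, v.2 ⟨j.val + 1, hj⟩ = 0 := by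
      intro j hj
      have := h2 j
      rw [dif_pos hj] at this
      linear_combination this
    refine ⟨v.2 ⟨0, hm⟩, ?_⟩
    ext i
    · simp [hxall]
    · simp only
      by_cases hi : i.val = 0
      · have : i = ⟨0, hm⟩ := by simp [Fin.ext_iff, hi]
        rw [if_pos hi, this]
      · rw [if_neg hi]
        obtain ⟨k, hk⟩ : ∃ k, i.val = k + 1 := ⟨i.val - 1, by omega⟩
        have hklt : k + 1 < m := hk ▸ i.isLt
        have hieq : i = ⟨k + 1, hklt⟩ := by simp [Fin.ext_iff, hk]
        rw [hieq]
        exact hy1 ⟨k, Nat.lt_of_succ_lt hklt⟩ hklt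
  · rintro ⟨c, rfl⟩
    unfold phi
    ext j
    · simp
    · simp only
      by_cases hj : j.val + 1 < m
      · rw [dif_pos hj]
        simp
      · rw [dif_neg hj]
        simp
end
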